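/- (Theorem 1 of the paper, explicit form.) Let V be a finite type, W : V → V → ℝ a row-stochastic matrix, α ∈ (0,1), and u ∈ V with W u u = 0. Let A* ⊆ V be a set with σ := ∑_{m ∈ A*} W u m < 1, let W_{A*} be the renormalized-deletion matrix of W at u with respect to A*, and let W_r be the matrix obtained from W by replacing row u with the zero row. Then for every rec ∈ V with rec ≠ u and W u rec = 0, PPR_{W_{A*}}(u, rec) = PPR_{W_{A*}}(u, u) · α^{−1}(1−α) · ∑_{n ∉ A*} W_{A*} u n · PPR_{W_r}(n, rec); i.e., the Personalized PageRank of rec personalized for u after removing the edges into A* factors into a term PPR_{W_{A*}}(u, u) depending only on A* and an aggregation of the scores PPR_{W_r}(n, rec) computed in the graph with all outgoing edges of u removed. -/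

import Mathlib

open scoped BigOperators

/-- A matrix is row-stochastic if all entries are nonnegative and each row sums to exactly 1. -/
def RowStochastic {V : Type*} [Fintype V] (W : Matrix V V ℝ) : Prop :=
  (∀ i j, 0 ≤ W i j) ∧ ∀ i, ∑ j, W i j = 1

/-- Personalized PageRank: `PPR W α s v = α * ∑' l, (1-α)^l * (W^l) s v`. -/
noncomputable def PPR {V : Type*} [Fintype V] [DecidableEq V]
    (W : Matrix V V ℝ) (α : ℝ) (s v : V) : ℝ :=
  α * ∑' l : ℕ, (1 - α) ^ l * (W ^ l) s v

/-- `zeroRow W u` is `W` with row `u` replaced by the zero row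
(removal of all outgoing edges of `u`). -/
def zeroRow {V : Type*} [DecidableEq V] (W : Matrix V V ℝ) (u : V) : Matrix V V ℝ :=
  fun n m => if n = u then 0 else W n m

/-- The renormalized-deletion matrix of `W` at `u` with respect to `A`: it agrees with `W`
outside row `u`; in row `u`, the entries into `A` are set to `0` and the remaining entries
are renormalized by `1 - ∑ x ∈ A, W u x`. -/
noncomputable def renormDel {V : Type*} [Fintype V] [DecidableEq V]
    (W : Matrix V V ℝ) (u : V) (A : Finset V) : Matrix V V ℝ :=
  fun n m =>
    if n = u then (if m ∈ A then 0 else W u m / (1 - ∑ x ∈ A, W u x)) else W n m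

/-! Put `G P := ∑ₗ ((1 - α) • P) ^ l`, so that `PPR P α = α • G P`. The deletion matrix
`M = renormDel W u A` and `R = zeroRow W u` differ only in row `u`, where `R` vanishes;
hence row `u` of `G R` is the `u`-th unit vector. The resolvent identity
`G M - G R = G M ((1 - α) • (M - R)) G R`, a consequence of `G M (1 - (1 - α) • M) = 1` and
`(1 - (1 - α) • R) G R = 1`, evaluated at `(u, rec)` is the factorization; the sum may run
over `Aᶜ` because `M u n = 0` for `n ∈ A`. -/

def RowSubstochastic {V : Type*} [Fintype V] (P : Matrix V V ℝ) : Prop :=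
  (∀ i j, 0 ≤ P i j) ∧ ∀ i, ∑ j, P i j ≤ 1

theorem RowStochastic.rowSubstochastic {V : Type*} [Fintype V] {P : Matrix V V ℝ}
    (hP : RowStochastic P) : RowSubstochastic P :=
  ⟨hP.1, fun i => (hP.2 i).le⟩

theorem renormDel_self_apply {V : Type*} [Fintype V] [DecidableEq V] (P : Matrix V V ℝ) (u : V)
    (A : Finset V) (m : V) :
    renormDel P u A u m = if m ∈ A then 0 else P u m / (1 - ∑ x ∈ A, P u x) :=
  if_pos rfl

namespace RowSubstochastic

variable {V : Type*} [Fintype V] {P Q : Matrix V V ℝ}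

theorem mul (hP : RowSubstochastic P) (hQ : RowSubstochastic Q) : RowSubstochastic (P * Q) := by
  refine ⟨fun i j => Finset.sum_nonneg fun k _ => mul_nonneg (hP.1 i k) (hQ.1 k j), fun i => ?_⟩
  calc ∑ j, (P * Q) i j = ∑ k, P i k * ∑ j, Q k j := by
        simp only [Matrix.mul_apply, Finset.mul_sum]
        exact Finset.sum_comm
    _ ≤ ∑ k, P i k := Finset.sum_le_sum fun k _ => mul_le_of_le_one_right (hP.1 i k) (hQ.2 k)
    _ ≤ 1 := hP.2 i

theorem apply_le_one (hP : RowSubstochastic P) (i j : V) : P i j ≤ 1 :=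
  (Finset.single_le_sum (fun k _ => hP.1 i k) (Finset.mem_univ j)).trans (hP.2 i)

variable [DecidableEq V]

theorem one : RowSubstochastic (1 : Matrix V V ℝ) :=
  ⟨fun i j => Matrix.zero_le_one_elem i j, fun i => by simp [Matrix.one_apply]⟩

theorem pow (hP : RowSubstochastic P) (l : ℕ) : RowSubstochastic (P ^ l) := by
  induction l with
  | zero => simpa using one
  | succ l ih => simpa [pow_succ] using ih.mul hP

theorem zeroRow (hP : RowSubstochastic P) (u : V) : RowSubstochastic (zeroRow P u) := by
  refine ⟨fun i j => ?_, fun i => ?_⟩ <;> by_cases hi : i = u <;>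
    simp [_root_.zeroRow, hi, hP.1, hP.2]

theorem renormDel {u : V} {A : Finset V} (hP : RowSubstochastic P) (hσ : ∑ m ∈ A, P u m < 1) :
    RowSubstochastic (renormDel P u A) := by
  have hpos : 0 < 1 - ∑ m ∈ A, P u m := sub_pos.mpr hσ
  refine ⟨fun i j => ?_, fun i => ?_⟩
  · simp only [_root_.renormDel]
    split_ifs
    exacts [le_rfl, div_nonneg (hP.1 u j) hpos.le, hP.1 i j]
  · by_cases hi : i = u
    · subst hi
      have hcompl : ∑ j ∈ Aᶜ, P i j ≤ 1 - ∑ m ∈ A, P i m := by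
        linarith [Finset.sum_add_sum_compl A (P i), hP.2 i]
      calc ∑ j, _root_.renormDel P i A i j = (∑ j ∈ Aᶜ, P i j) / (1 - ∑ m ∈ A, P i m) := by
            simp only [renormDel_self_apply]
            rw [← Finset.sum_compl_add_sum A, Finset.sum_div,
              Finset.sum_eq_zero (s := A) fun j hj => if_pos hj, add_zero]
            exact Finset.sum_congr rfl fun j hj => if_neg (Finset.mem_compl.mp hj)
        _ ≤ 1 := (div_le_one hpos).mpr hcompl
    · simpa [_root_.renormDel, hi] using hP.2 i

theorem summable_smul_pow (hP : RowSubstochastic P) {β : ℝ} (hβ₀ : 0 ≤ β) (hβ₁ : β < 1) :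
    Summable fun l : ℕ => (β • P) ^ l := by
  refine Pi.summable.mpr fun i => Pi.summable.mpr fun j => ?_
  refine .of_nonneg_of_le (fun l => ?_) (fun l => ?_) (summable_geometric_of_lt_one hβ₀ hβ₁)
  · simpa [smul_pow] using mul_nonneg (pow_nonneg hβ₀ l) ((hP.pow l).1 i j)
  · simpa [smul_pow] using
      mul_le_of_le_one_right (pow_nonneg hβ₀ l) ((hP.pow l).apply_le_one i j)

theorem PPR_eq_mul_tsum_pow (hP : RowSubstochastic P) {α : ℝ} (hα : α ∈ Set.Ioc (0 : ℝ) 1)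
    (s v : V) :
    PPR P α s v = α * (∑' l : ℕ, ((1 - α) • P) ^ l) s v := by
  have hs := hP.summable_smul_pow (sub_nonneg.mpr hα.2) (sub_lt_self 1 hα.1)
  have h := (Pi.hasSum.mp (Pi.hasSum.mp hs.hasSum s) v).tsum_eq
  rw [PPR, ← h]
  simp [smul_pow]

end RowSubstochastic

theorem Matrix.tsum_pow_apply_eq_mul_sum {V R : Type*} [Fintype V] [DecidableEq V] [Ring R]
    [TopologicalSpace R] [IsTopologicalRing R] [T2Space R] {X Y : Matrix V V R} {u v : V}
    (hX : Summable (X ^ ·)) (hY : Summable (Y ^ ·)) (hYu : ∀ j, Y u j = 0)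
    (hXY : ∀ i ≠ u, ∀ j, X i j = Y i j) (hv : v ≠ u) :
    (∑' l, X ^ l) u v = (∑' l, X ^ l) u u * ∑ n, X u n * (∑' l, Y ^ l) n v := by
  set G := ∑' l, X ^ l
  set H := ∑' l, Y ^ l
  have hresolvent : G = H + G * (X - Y) * H := by
    calc G = G * ((1 - Y) * H) := by rw [hY.one_sub_mul_tsum_pow, mul_one]
      _ = G * (1 - X) * H + G * (X - Y) * H := by noncomm_ring
      _ = H + G * (X - Y) * H := by rw [hX.tsum_pow_mul_one_sub, one_mul]
  have hHuv : H u v = 0 := by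
    have h := congrFun (congrFun hY.one_sub_mul_tsum_pow u) v
    rw [sub_mul, one_mul, Matrix.sub_apply, Matrix.mul_apply] at h
    simpa [hYu, Matrix.one_apply_ne hv.symm] using h
  have hrow : ∀ j, (G * (X - Y)) u j = G u u * X u j := by
    intro j
    rw [Matrix.mul_apply, Finset.sum_eq_single u (fun i _ hi => by simp [hXY i hi])
      (fun h => absurd (Finset.mem_univ u) h)]
    simp [hYu]
  calc G u v = (H + G * (X - Y) * H) u v := by rw [← hresolvent]
    _ = G u u * ∑ n, X u n * H n v := by
      rw [Matrix.add_apply, hHuv, zero_add, Matrix.mul_apply]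
      simp only [hrow, Finset.mul_sum, mul_assoc]

theorem PPR_eq_mul_sum_of_eq_off_row {V : Type*} [Fintype V] [DecidableEq V]
    {M R : Matrix V V ℝ} (hM : RowSubstochastic M) (hR : RowSubstochastic R) {u v : V}
    (hRu : ∀ j, R u j = 0) (hMR : ∀ i ≠ u, ∀ j, M i j = R i j) {α : ℝ}
    (hα : α ∈ Set.Ioc (0 : ℝ) 1) (hv : v ≠ u) :
    PPR M α u v = PPR M α u u * (α⁻¹ * (1 - α) * ∑ n, M u n * PPR R α n v) := by
  have hβ₀ : 0 ≤ 1 - α := sub_nonneg.mpr hα.2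
  have hβ₁ : 1 - α < 1 := sub_lt_self 1 hα.1
  have key := Matrix.tsum_pow_apply_eq_mul_sum (hM.summable_smul_pow hβ₀ hβ₁)
    (hR.summable_smul_pow hβ₀ hβ₁) (by simp [hRu]) (fun i hi j => by simp [hMR i hi j]) hv
  simp only [hM.PPR_eq_mul_tsum_pow hα, hR.PPR_eq_mul_tsum_pow hα, key, Matrix.smul_apply,
    smul_eq_mul, Finset.mul_sum]
  field_simp

theorem ppr_factorization_after_deletion_general
    {V : Type*} [Fintype V] [DecidableEq V] (W : Matrix V V ℝ)
    (hW : RowStochastic W) (α : ℝ) (hα : α ∈ Set.Ioo (0 : ℝ) 1)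
    (u : V)
    (A : Finset V) (hσ : ∑ m ∈ A, W u m < 1) :
    ∀ rec : V, rec ≠ u → W u rec = 0 →
      PPR (renormDel W u A) α u rec =
        PPR (renormDel W u A) α u u *
          (α⁻¹ * (1 - α) *
            ∑ n ∈ Aᶜ, renormDel W u A u n * PPR (zeroRow W u) α n rec) := by
  intro rec hrec _
  have hsub := hW.rowSubstochastic
  have hsum : ∑ n ∈ Aᶜ, renormDel W u A u n * PPR (zeroRow W u) α n rec =
      ∑ n, renormDel W u A u n * PPR (zeroRow W u) α n rec :=
    Finset.sum_subset (Finset.subset_univ _) fun n _ hn => by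
      rw [renormDel_self_apply, if_pos (by simpa using hn), zero_mul]
  rw [hsum]
  exact PPR_eq_mul_sum_of_eq_off_row (hsub.renormDel hσ) (hsub.zeroRow u)
    (fun j => if_pos rfl) (fun i hi j => by simp [renormDel, zeroRow, hi])
    (Set.Ioo_subset_Ioc_self hα) hrec

theorem ppr_factorization_after_deletion
    {V : Type*} [Fintype V] [DecidableEq V] (W : Matrix V V ℝ)
    (hW : RowStochastic W) (α : ℝ) (hα : α ∈ Set.Ioo (0 : ℝ) 1)
    (u : V) (hWuu : W u u = 0)
    (A : Finset V) (hσ : ∑ m ∈ A, W u m < 1) :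
    ∀ rec : V, rec ≠ u → W u rec = 0 →
      PPR (renormDel W u A) α u rec =
        PPR (renormDel W u A) α u u *
          (α⁻¹ * (1 - α) *
            ∑ n ∈ Aᶜ, renormDel W u A u n * PPR (zeroRow W u) α n rec) :=
  ppr_factorization_after_deletion_general W hW α hα u A hσ
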